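/- Let n > 2 and let V be an indecomposable metric Lie n-algebra that is neither simple nor one-dimensional. Then V possesses a minimal ideal I which is isotropic and satisfies [I, I, V, …, V] = 0; in particular I is abelian. -/

import Mathlib

open scoped BigOperators

section NLiePreamble

variable {n : ℕ} {V : Type*} [AddCommGroup V] [Module ℝ V]

def IsNJacobi (Φ : V [⋀^Fin n]→ₗ[ℝ] V) : Prop :=
  ∀ (x : Fin n → V) (i : Fin n) (y : Fin n → V),
    Φ (Function.update x i (Φ y)) =
      ∑ j : Fin n, Φ (Function.update y j (Φ (Function.update x i (y j))))

def IsIdealN (Φ : V [⋀^Fin n]→ₗ[ℝ] V) (I : Submodule ℝ V) : Prop :=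
  ∀ (y : Fin n → V) (i : Fin n), y i ∈ I → Φ y ∈ I

def IsSubalgebraN (Φ : V [⋀^Fin n]→ₗ[ℝ] V) (W : Submodule ℝ V) : Prop :=
  ∀ y : Fin n → V, (∀ i, y i ∈ W) → Φ y ∈ W

def IsSimpleN (Φ : V [⋀^Fin n]→ₗ[ℝ] V) : Prop :=
  1 < Module.finrank ℝ V ∧ ∀ I : Submodule ℝ V, IsIdealN Φ I → I = ⊥ ∨ I = ⊤

def bracketSpanN (Φ : V [⋀^Fin n]→ₗ[ℝ] V) (W : Submodule ℝ V) : Submodule ℝ V :=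
  Submodule.span ℝ {z | ∃ y : Fin n → V, (∀ i, y i ∈ W) ∧ Φ y = z}

def derivedSeriesN (Φ : V [⋀^Fin n]→ₗ[ℝ] V) (I : Submodule ℝ V) : ℕ → Submodule ℝ V
  | 0 => I
  | (k+1) => bracketSpanN Φ (derivedSeriesN Φ I k)

def IsSolvableN (Φ : V [⋀^Fin n]→ₗ[ℝ] V) (I : Submodule ℝ V) : Prop :=
  ∃ s, derivedSeriesN Φ I s = ⊥

def IsRadicalN (Φ : V [⋀^Fin n]→ₗ[ℝ] V) (R : Submodule ℝ V) : Prop :=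
  IsIdealN Φ R ∧ IsSolvableN Φ R ∧
    ∀ I : Submodule ℝ V, IsIdealN Φ I → IsSolvableN Φ I → I ≤ R

def IsSemisimpleN (Φ : V [⋀^Fin n]→ₗ[ℝ] V) : Prop :=
  ∀ I : Submodule ℝ V, IsIdealN Φ I → IsSolvableN Φ I → I = ⊥

def IsDerivationN (Φ : V [⋀^Fin n]→ₗ[ℝ] V) (D : V →ₗ[ℝ] V) : Prop :=
  ∀ y : Fin n → V, D (Φ y) = ∑ i : Fin n, Φ (Function.update y i (D (y i)))

def adMapN (Φ : V [⋀^Fin n]→ₗ[ℝ] V) (x : Fin n → V) (i : Fin n) : V →ₗ[ℝ] V where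
  toFun z := Φ (Function.update x i z)
  map_add' a b := by simp
  map_smul' c a := by simp

def centerN (Φ : V [⋀^Fin n]→ₗ[ℝ] V) : Submodule ℝ V where
  carrier := {z | ∀ (y : Fin n → V) (i : Fin n), Φ (Function.update y i z) = 0}
  add_mem' := by
    intro a b ha hb y i
    simp [ha y i, hb y i]
  zero_mem' := by
    intro y i
    simp
  smul_mem' := by
    intro c a ha y i
    simp [ha y i]

def IsInvariantN (Φ : V [⋀^Fin n]→ₗ[ℝ] V) (b : LinearMap.BilinForm ℝ V) : Prop :=
  ∀ (x : Fin n → V) (i : Fin n) (y₁ y₂ : V),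
    b (Φ (Function.update x i y₁)) y₂ = - b (Φ (Function.update x i y₂)) y₁

def perpN (b : LinearMap.BilinForm ℝ V) (W : Submodule ℝ V) : Submodule ℝ V where
  carrier := {v | ∀ w ∈ W, b v w = 0}
  add_mem' := by
    intro a c ha hc w hw
    simp [ha w hw, hc w hw]
  zero_mem' := by
    intro w hw
    simp
  smul_mem' := by
    intro r a ha w hw
    simp [ha w hw]

def IsNondegN (b : LinearMap.BilinForm ℝ V) : Prop :=
  ∀ v : V, (∀ w : V, b v w = 0) → v = 0

def IsSymmN (b : LinearMap.BilinForm ℝ V) : Prop := ∀ v w : V, b v w = b w v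

def IsDecomposableN (Φ : V [⋀^Fin n]→ₗ[ℝ] V) (b : LinearMap.BilinForm ℝ V) : Prop :=
  ∃ W₁ W₂ : Submodule ℝ V, W₁ ≠ ⊥ ∧ W₂ ≠ ⊥ ∧ IsCompl W₁ W₂ ∧
    IsSubalgebraN Φ W₁ ∧ IsSubalgebraN Φ W₂ ∧
    (∀ v ∈ W₁, ∀ w ∈ W₂, b v w = 0) ∧
    (∀ (y : Fin n → V) (i j : Fin n), i ≠ j → y i ∈ W₁ → y j ∈ W₂ → Φ y = 0)

def IsIndecomposableN (Φ : V [⋀^Fin n]→ₗ[ℝ] V) (b : LinearMap.BilinForm ℝ V) : Prop :=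
  0 < Module.finrank ℝ V ∧ ¬ IsDecomposableN Φ b

end NLiePreamble

/-!
Choose a minimal ideal `I` inside a proper nonzero ideal. By invariance `I^⊥` is an ideal, so
`I ⊓ I^⊥` is an ideal contained in `I`: it is either `0` or `I`. If it were `0`, then
`V = I ⊕ I^⊥` would split `V` orthogonally into two nonzero ideals, whose mixed brackets lie in
`I ⊓ I^⊥ = 0`; this contradicts indecomposability. Hence `I` is isotropic, and then
`⟨[y₁, …, yₙ], z⟩ = -⟨[y₁, …, z, …, yₙ], yᵢ⟩ = 0` whenever two of the `yₖ` lie in `I`.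
-/

section MetricLieN

variable {n : ℕ} {V : Type*} [AddCommGroup V] [Module ℝ V]
  {Φ : V [⋀^Fin n]→ₗ[ℝ] V} {b : LinearMap.BilinForm ℝ V}

def IsMinimalIdealN (Φ : V [⋀^Fin n]→ₗ[ℝ] V) (I : Submodule ℝ V) : Prop :=
  IsIdealN Φ I ∧ I ≠ ⊥ ∧ ∀ J : Submodule ℝ V, IsIdealN Φ J → J ≤ I → J = ⊥ ∨ J = I

theorem IsInvariantN.apply_eq_neg_apply_update (hinv : IsInvariantN Φ b) (y : Fin n → V)
    (i : Fin n) (z : V) : b (Φ y) z = -b (Φ (Function.update y i z)) (y i) := by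
  simpa only [Function.update_eq_self] using hinv y i (y i) z

theorem IsIdealN.inf {I J : Submodule ℝ V} (hI : IsIdealN Φ I) (hJ : IsIdealN Φ J) :
    IsIdealN Φ (I ⊓ J) :=
  fun y i hyi => ⟨hI y i hyi.1, hJ y i hyi.2⟩

theorem IsIdealN.isSubalgebraN (hn : 0 < n) {I : Submodule ℝ V} (hI : IsIdealN Φ I) :
    IsSubalgebraN Φ I :=
  fun y hy => hI y ⟨0, hn⟩ (hy _)

theorem IsIdealN.perpN (hsymm : IsSymmN b) (hinv : IsInvariantN Φ b) {I : Submodule ℝ V}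
    (hI : IsIdealN Φ I) : IsIdealN Φ (perpN b I) := by
  intro y i hyi w hw
  have hbracket : Φ (Function.update y i w) ∈ I := hI _ i (by rwa [Function.update_self])
  rw [hinv.apply_eq_neg_apply_update y i w, hsymm, hyi _ hbracket, neg_zero]

theorem perpN_eq_orthogonal (hsymm : IsSymmN b) (W : Submodule ℝ V) :
    perpN b W = b.orthogonal W := by
  ext v
  exact forall₂_congr fun w _ => by rw [hsymm]

theorem isCompl_perpN_of_inf_eq_bot [FiniteDimensional ℝ V] (hsymm : IsSymmN b)
    {W : Submodule ℝ V} (hW : W ⊓ perpN b W = ⊥) : IsCompl W (perpN b W) := by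
  have hrefl : b.IsRefl := fun x y h => by rwa [hsymm]
  rw [perpN_eq_orthogonal hsymm] at hW ⊢
  exact (b.isCompl_orthogonal_iff_disjoint hrefl).mpr (disjoint_iff.mpr hW)

theorem isDecomposableN_of_inf_perpN_eq_bot [FiniteDimensional ℝ V] (hn : 0 < n)
    (hsymm : IsSymmN b) (hinv : IsInvariantN Φ b) {I : Submodule ℝ V} (hI : IsIdealN Φ I)
    (hI_bot : I ≠ ⊥) (hI_top : I ≠ ⊤) (hK : I ⊓ perpN b I = ⊥) : IsDecomposableN Φ b := by
  have hcompl := isCompl_perpN_of_inf_eq_bot hsymm hK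
  have hperp : IsIdealN Φ (perpN b I) := hI.perpN hsymm hinv
  have hperp_bot : perpN b I ≠ ⊥ := fun h => hI_top (by simpa [h] using hcompl.sup_eq_top)
  refine ⟨I, perpN b I, hI_bot, hperp_bot, hcompl, hI.isSubalgebraN hn,
    hperp.isSubalgebraN hn, fun v hv w hw => by rw [hsymm]; exact hw v hv, ?_⟩
  intro y i j _ hyi hyj
  simpa [hK] using (show Φ y ∈ I ⊓ perpN b I from ⟨hI y i hyi, hperp y j hyj⟩)

theorem exists_isMinimalIdealN_le [FiniteDimensional ℝ V] {I : Submodule ℝ V}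
    (hI : IsIdealN Φ I) (hI_bot : I ≠ ⊥) : ∃ M, IsMinimalIdealN Φ M ∧ M ≤ I := by
  obtain ⟨M, ⟨hM, hM_bot, hMI⟩, hM_min⟩ := wellFounded_lt.has_min
    {J : Submodule ℝ V | IsIdealN Φ J ∧ J ≠ ⊥ ∧ J ≤ I} ⟨I, hI, hI_bot, le_rfl⟩
  refine ⟨M, ⟨hM, hM_bot, fun J hJ hJM => ?_⟩, hMI⟩
  by_contra! hJ_ne
  exact hM_min J ⟨hJ, hJ_ne.1, hJM.trans hMI⟩ (lt_of_le_of_ne hJM hJ_ne.2)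

theorem IsMinimalIdealN.le_perpN [FiniteDimensional ℝ V] (hn : 0 < n) (hsymm : IsSymmN b)
    (hinv : IsInvariantN Φ b) (hind : IsIndecomposableN Φ b) {I : Submodule ℝ V}
    (hI : IsMinimalIdealN Φ I) (hI_top : I ≠ ⊤) : I ≤ perpN b I := by
  obtain ⟨hI_id, hI_bot, hI_min⟩ := hI
  rcases hI_min _ (hI_id.inf (hI_id.perpN hsymm hinv)) inf_le_left with hK | hK
  · exact absurd (isDecomposableN_of_inf_perpN_eq_bot hn hsymm hinv hI_id hI_bot hI_top hK)
      hind.2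
  · exact inf_eq_left.mp hK

theorem bracket_eq_zero_of_le_perpN (hnd : IsNondegN b) (hinv : IsInvariantN Φ b)
    {I : Submodule ℝ V} (hI : IsIdealN Φ I) (hiso : I ≤ perpN b I) (y : Fin n → V)
    {i j : Fin n} (hij : i ≠ j) (hyi : y i ∈ I) (hyj : y j ∈ I) : Φ y = 0 := by
  refine hnd _ fun z => ?_
  have hbracket : Φ (Function.update y i z) ∈ I :=
    hI _ j (by rwa [Function.update_of_ne hij.symm])
  rw [hinv.apply_eq_neg_apply_update y i z, hiso hbracket _ hyi, neg_zero]

theorem exists_ideal_ne_bot_ne_top (hrank : 1 < Module.finrank ℝ V)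
    (hnotsimple : ¬ IsSimpleN Φ) : ∃ I, IsIdealN Φ I ∧ I ≠ ⊥ ∧ I ≠ ⊤ := by
  simp only [IsSimpleN, hrank, true_and, not_forall, not_or] at hnotsimple
  obtain ⟨I, hI, hI_bot, hI_top⟩ := hnotsimple
  exact ⟨I, hI, hI_bot, hI_top⟩

end MetricLieN

theorem indecomposable_has_isotropic_minimal_ideal_general
    (n : ℕ) (hn : 2 < n) (V : Type*) [AddCommGroup V] [Module ℝ V]
    [FiniteDimensional ℝ V]
    (Φ : V [⋀^Fin n]→ₗ[ℝ] V)
    (b : LinearMap.BilinForm ℝ V)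
    (hsymm : IsSymmN b) (hnd : IsNondegN b) (hinv : IsInvariantN Φ b)
    (hind : IsIndecomposableN Φ b)
    (hnotsimple : ¬ IsSimpleN Φ) (hnotone : Module.finrank ℝ V ≠ 1) :
    ∃ I : Submodule ℝ V, IsIdealN Φ I ∧ I ≠ ⊥ ∧
      (∀ J : Submodule ℝ V, IsIdealN Φ J → J ≤ I → J = ⊥ ∨ J = I) ∧
      I ≤ perpN b I ∧
      (∀ (y : Fin n → V) (i j : Fin n), i ≠ j → y i ∈ I → y j ∈ I → Φ y = 0) ∧
      (∀ y : Fin n → V, (∀ i, y i ∈ I) → Φ y = 0) := by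
  obtain ⟨I₀, hI₀, hI₀_bot, hI₀_top⟩ :=
    exists_ideal_ne_bot_ne_top (by have := hind.1; omega) hnotsimple
  obtain ⟨I, hI, hII₀⟩ := exists_isMinimalIdealN_le hI₀ hI₀_bot
  have hI_top : I ≠ ⊤ := fun h => hI₀_top (top_le_iff.mp (h ▸ hII₀))
  have hiso : I ≤ perpN b I := hI.le_perpN (by omega) hsymm hinv hind hI_top
  have hvanish : ∀ (y : Fin n → V) (i j : Fin n), i ≠ j → y i ∈ I → y j ∈ I → Φ y = 0 :=
    fun y _ _ hij => bracket_eq_zero_of_le_perpN hnd hinv hI.1 hiso y hij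
  refine ⟨I, hI.1, hI.2.1, hI.2.2, hiso, hvanish, fun y hy => ?_⟩
  exact hvanish y ⟨0, by omega⟩ ⟨1, by omega⟩ (by simp [Fin.ext_iff]) (hy _) (hy _)

/-- an indecomposable metric Lie `n`-algebra (`n > 2`) which is
neither simple nor one-dimensional possesses a minimal ideal `I` which is
isotropic and satisfies `[I,I,V,…,V] = 0`; in particular `I` is abelian. -/
theorem indecomposable_has_isotropic_minimal_ideal
    (n : ℕ) (hn : 2 < n) (V : Type*) [AddCommGroup V] [Module ℝ V]
    [FiniteDimensional ℝ V]
    (Φ : V [⋀^Fin n]→ₗ[ℝ] V) (hΦ : IsNJacobi Φ)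
    (b : LinearMap.BilinForm ℝ V)
    (hsymm : IsSymmN b) (hnd : IsNondegN b) (hinv : IsInvariantN Φ b)
    (hind : IsIndecomposableN Φ b)
    (hnotsimple : ¬ IsSimpleN Φ) (hnotone : Module.finrank ℝ V ≠ 1) :
    ∃ I : Submodule ℝ V, IsIdealN Φ I ∧ I ≠ ⊥ ∧
      (∀ J : Submodule ℝ V, IsIdealN Φ J → J ≤ I → J = ⊥ ∨ J = I) ∧
      I ≤ perpN b I ∧
      (∀ (y : Fin n → V) (i j : Fin n), i ≠ j → y i ∈ I → y j ∈ I → Φ y = 0) ∧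
      (∀ y : Fin n → V, (∀ i, y i ∈ I) → Φ y = 0) :=
  indecomposable_has_isotropic_minimal_ideal_general n hn V Φ b hsymm hnd hinv hind hnotsimple
    hnotone
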